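/- Monodromy factorization for covariantly quadratic Hamiltonians (Corollary 6.2, formula (6.12)): Let ω be a symplectic form on ℝ^{2n} with Poisson tensor Ψ = ω^{-1}, Γ a symplectic connection for ω, and H : ℝ^{2n} → ℝ smooth. Fix y and assume the Hamiltonian flow X^t of H exists for t ∈ [0,T] near y. Denote by ∇²H the covariant Hessian matrix ∇²_{jk}H = ∂_{z^j}∂_{z^k}H − Σ_m Γ^m_{jk}∂_{z^m}H, and assume H is covariantly quadratic along the trajectory: for all τ ∈ [0,T] and all j,k, Σ_r (Σ_m ∂_{z^m}H Ψ^{mr})(X^τ(y)) · (∂_{z^r}∇²_{jk}H − Σ_m Γ^m_{jr}∇²_{mk}H − Σ_m Γ^m_{kr}∇²_{jm}H)(X^τ(y)) = 0. Then the Jacobian of the flow at y factorizes as (∂X^t(x)/∂x)|_{x=y} = V(t)·exp(−t·Ψ(y)·∇²H(y)), where V(t) is the Γ-parallel transport along the trajectory (dV^i_k/dt = −Σ_{j,m}(dX^t(y)^j/dt)Γ^i_{mj}(X^t(y))V^m_k, V(0) = I) and exp is the matrix exponential. In particular, for a periodic trajectory the monodromy matrix factors into the geometric monodromy (holonomy of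 Γ) and the dynamical monodromy with generator −Ψ(y)∇²H(y). -/

import Mathlib

open scoped BigOperators
noncomputable section

/-- Points of coordinate space `ℝ^N`. -/
abbrev Pt (N : ℕ) := Fin N → ℝ

/-- Partial derivative `∂f/∂x^i` of a scalar function on `ℝ^N`. -/
noncomputable def pd {N : ℕ} (i : Fin N) (f : Pt N → ℝ) (x : Pt N) : ℝ :=
  fderiv ℝ f x (Pi.single i 1)

/-- The Poisson tensor `Ψ = ω⁻¹`. -/
noncomputable def Psi {N : ℕ} (ω : Pt N → Matrix (Fin N) (Fin N) ℝ) (z : Pt N) :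
    Matrix (Fin N) (Fin N) ℝ := (ω z)⁻¹

/-- The Poisson bracket `{f,g}(z) = Σ ∂_m f Ψ^{mi} ∂_i g`. -/
noncomputable def pb {N : ℕ} (ω : Pt N → Matrix (Fin N) (Fin N) ℝ) (f g : Pt N → ℝ)
    (z : Pt N) : ℝ := ∑ m, ∑ i, pd m f z * Psi ω z m i * pd i g z

/-- A symplectic form on `ℝ^N` in coordinates: a smooth, pointwise antisymmetric and
invertible matrix-valued map satisfying the closedness condition. -/
structure SymplForm (N : ℕ) where
  ω : Pt N → Matrix (Fin N) (Fin N) ℝ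
  smooth : ∀ i j, ContDiff ℝ (⊤ : ℕ∞) fun z => ω z i j
  antisymm : ∀ z i j, ω z i j = - ω z j i
  invertible : ∀ z, IsUnit (ω z).det
  closed : ∀ z i j k,
    pd i (fun w => ω w j k) z + pd j (fun w => ω w k i) z + pd k (fun w => ω w i j) z = 0

/-- A symplectic connection for `S`: smooth Christoffel symbols `Γ x j k l = Γ^j_{kl}(x)`,
symmetric in the lower indices, with `ω` covariantly constant. -/
structure SymplConn (N : ℕ) (S : SymplForm N) where
  Γ : Pt N → Fin N → Fin N → Fin N → ℝ
  smooth : ∀ j k l, ContDiff ℝ (⊤ : ℕ∞) fun z => Γ z j k l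
  symm : ∀ z j k l, Γ z j k l = Γ z j l k
  compat : ∀ z i j k,
    pd k (fun w => S.ω w i j) z - (∑ l, Γ z l i k * S.ω z l j)
      - (∑ l, Γ z l j k * S.ω z i l) = 0

/-- The covariant Hessian matrix `(∇²H)_{jk} = ∂_j∂_k H − Σ_m Γ^m_{jk}∂_m H`. -/
noncomputable def covHessM {N : ℕ} {S : SymplForm N} (C : SymplConn N S)
    (h : Pt N → ℝ) (z : Pt N) : Matrix (Fin N) (Fin N) ℝ :=
  Matrix.of fun j k => pd j (fun w => pd k h w) z - ∑ m, C.Γ z m j k * pd m h z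

section Helpers
open Finset

variable {N : ℕ}

lemma clm_sum_repr (L : (Pt N) →L[ℝ] ℝ) (v : Pt N) :
    L v = ∑ r, v r * L (Pi.single r 1) := by
  have hv : v = ∑ r, (v r) • (Pi.single r 1 : Pt N) := by
    funext j
    simp [Finset.sum_apply, Pi.single_apply]
  conv_lhs => rw [hv]
  rw [map_sum]
  simp [smul_eq_mul]

lemma pd_sum {ι : Type*} (s : Finset ι) (f : ι → Pt N → ℝ) (z : Pt N) (i : Fin N)
    (hf : ∀ a ∈ s, DifferentiableAt ℝ (f a) z) :
    pd i (fun w => ∑ a ∈ s, f a w) z = ∑ a ∈ s, pd i (f a) z := by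
  unfold pd
  rw [fderiv_fun_sum hf]
  simp

lemma pd_mul (f g : Pt N → ℝ) (z : Pt N) (i : Fin N)
    (hf : DifferentiableAt ℝ f z) (hg : DifferentiableAt ℝ g z) :
    pd i (fun w => f w * g w) z = pd i f z * g z + f z * pd i g z := by
  unfold pd
  rw [fderiv_fun_mul hf hg]
  simp only [ContinuousLinearMap.add_apply, ContinuousLinearMap.smul_apply, smul_eq_mul]
  ring

lemma pd_const (c : ℝ) (z : Pt N) (i : Fin N) : pd i (fun _ => c) z = 0 := by
  unfold pd
  rw [fderiv_fun_const]
  simp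

lemma contDiff_pd (f : Pt N → ℝ) (hf : ContDiff ℝ (⊤ : ℕ∞) f) (i : Fin N) :
    ContDiff ℝ (⊤ : ℕ∞) fun z => pd i f z :=
  (hf.fderiv_right (by simp)).clm_apply contDiff_const

lemma contDiff_det' {M : ℕ} (B : Pt N → Matrix (Fin M) (Fin M) ℝ)
    (hB : ∀ i j, ContDiff ℝ (⊤ : ℕ∞) fun z => B z i j) :
    ContDiff ℝ (⊤ : ℕ∞) fun z => (B z).det := by
  simp only [Matrix.det_apply']
  exact ContDiff.sum fun σ _ =>
    contDiff_const.mul (contDiff_prod fun i _ => hB (σ i) i)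

lemma contDiff_Psi (S : SymplForm N) (m i : Fin N) :
    ContDiff ℝ (⊤ : ℕ∞) fun z => Psi S.ω z m i := by
  have hdet : ContDiff ℝ (⊤ : ℕ∞) fun z => (S.ω z).det := contDiff_det' _ S.smooth
  have hadj : ContDiff ℝ (⊤ : ℕ∞) fun z => (S.ω z).adjugate m i := by
    simp only [Matrix.adjugate_apply]
    apply contDiff_det'
    intro a b
    simp only [Matrix.updateRow_apply]
    rcases eq_or_ne a i with h | h
    · simp only [h, if_pos rfl]
      exact contDiff_const
    · simp only [if_neg h]
      exact S.smooth a b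
  have hrw : (fun z => Psi S.ω z m i)
      = fun z => ((S.ω z).det)⁻¹ * (S.ω z).adjugate m i := by
    funext z
    rw [Psi, Matrix.inv_def, Ring.inverse_eq_inv]
    simp [Matrix.smul_apply, smul_eq_mul]
  rw [hrw]
  exact (hdet.inv fun z => (S.invertible z).ne_zero).mul hadj

lemma Psi_mul_omega (S : SymplForm N) (z : Pt N) (m b : Fin N) :
    ∑ a, Psi S.ω z m a * S.ω z a b = (1 : Matrix (Fin N) (Fin N) ℝ) m b := by
  rw [← Matrix.mul_apply, Psi, Matrix.nonsing_inv_mul _ (S.invertible z)]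

lemma omega_mul_Psi (S : SymplForm N) (z : Pt N) (m b : Fin N) :
    ∑ a, S.ω z m a * Psi S.ω z a b = (1 : Matrix (Fin N) (Fin N) ℝ) m b := by
  rw [← Matrix.mul_apply, Psi, Matrix.mul_nonsing_inv _ (S.invertible z)]

lemma sum_mul_one_matrix (f : Fin N → ℝ) (i : Fin N) :
    ∑ a, f a * (1 : Matrix (Fin N) (Fin N) ℝ) a i = f i := by
  simp [Matrix.one_apply]

end Helpers
section Helpers2
open Finset

variable {N : ℕ}

lemma one_matrix_mul_sum (f : Fin N → ℝ) (i : Fin N) :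
    ∑ a, (1 : Matrix (Fin N) (Fin N) ℝ) i a * f a = f i := by
  simp [Matrix.one_apply]

lemma pd_pd_eq_fderiv2 (f : Pt N → ℝ) (hf : ContDiff ℝ (⊤ : ℕ∞) f) (z : Pt N) (j k : Fin N) :
    pd j (fun w => pd k f w) z
      = fderiv ℝ (fderiv ℝ f) z (Pi.single j 1) (Pi.single k 1) := by
  unfold pd
  have hdf : DifferentiableAt ℝ (fderiv ℝ f) z :=
    ((hf.fderiv_right (m := (⊤ : ℕ∞)) (by simp)).differentiable (by simp)) z
  rw [fderiv_clm_apply hdf (differentiableAt_const _)]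
  simp

lemma pd_pd_symm (f : Pt N → ℝ) (hf : ContDiff ℝ (⊤ : ℕ∞) f) (z : Pt N) (j k : Fin N) :
    pd j (fun w => pd k f w) z = pd k (fun w => pd j f w) z := by
  rw [pd_pd_eq_fderiv2 f hf z j k, pd_pd_eq_fderiv2 f hf z k j]
  exact second_derivative_symmetric
    (fun y => ((hf.differentiable (by simp)) y).hasFDerivAt)
    (((hf.fderiv_right (m := (⊤ : ℕ∞)) (by simp)).differentiable (by simp) z).hasFDerivAt) _ _

lemma pd_Psi (S : SymplForm N) (C : SymplConn N S) (z : Pt N) (r m i : Fin N) :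
    pd r (fun w => Psi S.ω w m i) z
      = -(∑ a, Psi S.ω z m a * C.Γ z i a r) - ∑ b, C.Γ z m b r * Psi S.ω z b i := by
  have dPsi : ∀ a b : Fin N, DifferentiableAt ℝ (fun w => Psi S.ω w a b) z :=
    fun a b => (contDiff_Psi S a b).differentiable (by simp) z
  have dω : ∀ a b : Fin N, DifferentiableAt ℝ (fun w => S.ω w a b) z :=
    fun a b => (S.smooth a b).differentiable (by simp) z
  have key : ∀ b, ∑ a, pd r (fun w => Psi S.ω w m a) z * S.ω z a b
      = -∑ a, Psi S.ω z m a * pd r (fun w => S.ω w a b) z := by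
    intro b
    have h0 : pd r (fun w => ∑ a, Psi S.ω w m a * S.ω w a b) z = 0 := by
      have hc : (fun w => ∑ a, Psi S.ω w m a * S.ω w a b)
          = fun _ => (1 : Matrix (Fin N) (Fin N) ℝ) m b := by
        funext w; exact Psi_mul_omega S w m b
      rw [hc, pd_const]
    rw [pd_sum _ _ _ _ (fun a _ => ((dPsi m a).fun_mul (dω a b)))] at h0
    rw [Finset.sum_congr rfl
      (fun a _ => pd_mul _ _ _ _ (dPsi m a) (dω a b)), Finset.sum_add_distrib] at h0
    linarith
  have hcompat : ∀ a b : Fin N, pd r (fun w => S.ω w a b) z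
      = (∑ l, C.Γ z l a r * S.ω z l b) + ∑ l, C.Γ z l b r * S.ω z a l := by
    intro a b
    have h := C.compat z a b r
    linarith
  calc pd r (fun w => Psi S.ω w m i) z
      = ∑ a, pd r (fun w => Psi S.ω w m a) z * (1 : Matrix (Fin N) (Fin N) ℝ) a i :=
        (sum_mul_one_matrix (fun a => pd r (fun w => Psi S.ω w m a) z) i).symm
    _ = ∑ a, pd r (fun w => Psi S.ω w m a) z * (∑ b, S.ω z a b * Psi S.ω z b i) := by
        refine Finset.sum_congr rfl fun a _ => ?_
        rw [omega_mul_Psi]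
    _ = ∑ a, ∑ b, pd r (fun w => Psi S.ω w m a) z * S.ω z a b * Psi S.ω z b i := by
        simp [Finset.mul_sum, mul_assoc]
    _ = ∑ b, (∑ a, pd r (fun w => Psi S.ω w m a) z * S.ω z a b) * Psi S.ω z b i := by
        rw [Finset.sum_comm]
        simp [Finset.sum_mul]
    _ = ∑ b, (-∑ a, Psi S.ω z m a * pd r (fun w => S.ω w a b) z) * Psi S.ω z b i := by
        refine Finset.sum_congr rfl fun b _ => ?_
        rw [key b]
    _ = -∑ b, ∑ a, Psi S.ω z m a * pd r (fun w => S.ω w a b) z * Psi S.ω z b i := by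
        simp [Finset.sum_mul, Finset.sum_neg_distrib]
    _ = -∑ b, ∑ a, (Psi S.ω z m a * (∑ l, C.Γ z l a r * S.ω z l b)
          + Psi S.ω z m a * (∑ l, C.Γ z l b r * S.ω z a l)) * Psi S.ω z b i := by
        refine congrArg Neg.neg (Finset.sum_congr rfl fun b _ => Finset.sum_congr rfl fun a _ => ?_)
        rw [hcompat a b, mul_add]
    _ = -(∑ a, Psi S.ω z m a * C.Γ z i a r) - ∑ b, C.Γ z m b r * Psi S.ω z b i := by
        simp only [add_mul, Finset.sum_add_distrib, neg_add]
        congr 1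
        · -- first triple sum
          rw [show ∀ x:ℝ, -x = -x from fun _ => rfl]
          congr 1
          calc ∑ b, ∑ a, Psi S.ω z m a * (∑ l, C.Γ z l a r * S.ω z l b) * Psi S.ω z b i
              = ∑ a, Psi S.ω z m a * ∑ l, C.Γ z l a r * ∑ b, S.ω z l b * Psi S.ω z b i := by
                rw [Finset.sum_comm]
                refine Finset.sum_congr rfl fun a _ => ?_
                simp [Finset.mul_sum, Finset.sum_mul, mul_assoc]
                rw [Finset.sum_comm]
            _ = ∑ a, Psi S.ω z m a * C.Γ z i a r := by
                refine Finset.sum_congr rfl fun a _ => ?_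
                congr 1
                calc ∑ l, C.Γ z l a r * ∑ b, S.ω z l b * Psi S.ω z b i
                    = ∑ l, C.Γ z l a r * (1 : Matrix (Fin N) (Fin N) ℝ) l i := by
                      refine Finset.sum_congr rfl fun l _ => ?_
                      rw [omega_mul_Psi]
                  _ = C.Γ z i a r := sum_mul_one_matrix _ i
        · -- second triple sum
          congr 1
          calc ∑ b, ∑ a, Psi S.ω z m a * (∑ l, C.Γ z l b r * S.ω z a l) * Psi S.ω z b i
              = ∑ b, (∑ l, (∑ a, Psi S.ω z m a * S.ω z a l) * C.Γ z l b r) * Psi S.ω z b i := by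
                refine Finset.sum_congr rfl fun b _ => ?_
                simp only [Finset.mul_sum, Finset.sum_mul]
                rw [Finset.sum_comm]
                exact Finset.sum_congr rfl fun l _ => Finset.sum_congr rfl fun a _ => by ring
            _ = ∑ b, C.Γ z m b r * Psi S.ω z b i := by
                refine Finset.sum_congr rfl fun b _ => ?_
                congr 1
                calc ∑ l, (∑ a, Psi S.ω z m a * S.ω z a l) * C.Γ z l b r
                    = ∑ l, (1 : Matrix (Fin N) (Fin N) ℝ) m l * C.Γ z l b r := by
                      refine Finset.sum_congr rfl fun l _ => ?_
                      rw [Psi_mul_omega]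
                  _ = C.Γ z m b r := one_matrix_mul_sum _ m

end Helpers2
section Helpers3
open Finset

variable {N : ℕ}

lemma pd_comp (f : Pt N → ℝ) (g : Pt N → Pt N) (y : Pt N) (k : Fin N)
    (hf : DifferentiableAt ℝ f (g y)) (hg : ∀ r, DifferentiableAt ℝ (fun x => g x r) y) :
    pd k (fun x => f (g x)) y = ∑ r, pd r f (g y) * pd k (fun x => g x r) y := by
  have hG : HasFDerivAt g (ContinuousLinearMap.pi fun r => fderiv ℝ (fun x => g x r) y) y :=
    hasFDerivAt_pi.2 fun r => (hg r).hasFDerivAt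
  have hcomp := hf.hasFDerivAt.comp y hG
  show fderiv ℝ (f ∘ g) y (Pi.single k 1) = _
  rw [hcomp.fderiv, ContinuousLinearMap.comp_apply,
    clm_sum_repr (fderiv ℝ f (g y)) _]
  refine Finset.sum_congr rfl fun r _ => ?_
  rw [mul_comm]
  rfl

lemma hasDerivAt_comp_curve (f : Pt N → ℝ) (c : ℝ → Pt N) (c' : Pt N) (t : ℝ)
    (hc : ∀ r, HasDerivAt (fun τ => c τ r) (c' r) t)
    (hf : DifferentiableAt ℝ f (c t)) :
    HasDerivAt (fun τ => f (c τ)) (∑ r, c' r * pd r f (c t)) t := by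
  have hC : HasDerivAt c c' t := hasDerivAt_pi.2 hc
  have h := hf.hasFDerivAt.comp_hasDerivAt t hC
  exact h.congr_deriv (clm_sum_repr (fderiv ℝ f (c t)) c')

lemma hasDerivAt_param (g : ℝ × Pt N → ℝ) (hg : ContDiff ℝ (⊤ : ℕ∞) g) (x : Pt N) (t : ℝ) :
    HasDerivAt (fun τ => g (τ, x)) (fderiv ℝ g (t, x) ((1 : ℝ), (0 : Pt N))) t :=
  ((hg.differentiable (by simp) (t, x)).hasFDerivAt).comp_hasDerivAt t
    ((hasDerivAt_id t).prodMk (hasDerivAt_const t x))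

lemma hasDerivAt_pd_param (g : ℝ × Pt N → ℝ) (hg : ContDiff ℝ (⊤ : ℕ∞) g) (y : Pt N) (k : Fin N)
    (t : ℝ) :
    HasDerivAt (fun τ => pd k (fun x => g (τ, x)) y)
      (pd k (fun x => (fderiv ℝ g (t, x)) ((1 : ℝ), (0 : Pt N))) y) t := by
  set D := fderiv ℝ g with hD
  have hDcont : ContDiff ℝ (⊤ : ℕ∞) D := hg.fderiv_right (by simp)
  -- Step A
  have stepA : ∀ τ, pd k (fun x => g (τ, x)) y = D (τ, y) ((0 : ℝ), Pi.single k 1) := by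
    intro τ
    have hemb : HasFDerivAt (fun x : Pt N => (τ, x))
        (ContinuousLinearMap.inr ℝ ℝ (Pt N)) y := hasFDerivAt_prodMk_right τ y
    have hcomp := (hg.differentiable (by simp) (τ, y)).hasFDerivAt.comp y hemb
    show fderiv ℝ ((fun q => g q) ∘ (fun x : Pt N => (τ, x))) y (Pi.single k 1) = _
    rw [hcomp.fderiv]
    rfl
  -- Step B
  have h1 : HasDerivAt (fun τ => D (τ, y)) (fderiv ℝ D (t, y) ((1 : ℝ), (0 : Pt N))) t :=
    ((hDcont.differentiable (by simp) (t, y)).hasFDerivAt).comp_hasDerivAt t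
      ((hasDerivAt_id t).prodMk (hasDerivAt_const t y))
  have h2 : HasDerivAt (fun τ => D (τ, y) ((0 : ℝ), Pi.single k 1))
      (fderiv ℝ D (t, y) ((1 : ℝ), (0 : Pt N)) ((0 : ℝ), Pi.single k 1)) t := by
    have := h1.clm_apply (hasDerivAt_const t ((0 : ℝ), (Pi.single k 1 : Pt N)))
    simpa using this
  -- Step C
  have hsymm : fderiv ℝ D (t, y) ((1 : ℝ), (0 : Pt N)) ((0 : ℝ), Pi.single k 1)
      = fderiv ℝ D (t, y) ((0 : ℝ), Pi.single k 1) ((1 : ℝ), (0 : Pt N)) :=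
    second_derivative_symmetric (f := g) (f' := D)
      (fun q => (hg.differentiable (by simp) q).hasFDerivAt)
      ((hDcont.differentiable (by simp) (t, y)).hasFDerivAt) _ _
  -- Step D
  have stepD : pd k (fun x => D (t, x) ((1 : ℝ), (0 : Pt N))) y
      = fderiv ℝ D (t, y) ((0 : ℝ), Pi.single k 1) ((1 : ℝ), (0 : Pt N)) := by
    have h3 : HasFDerivAt (fun x => D (t, x))
        ((fderiv ℝ D (t, y)).comp (ContinuousLinearMap.inr ℝ ℝ (Pt N))) y :=
      ((hDcont.differentiable (by simp) (t, y)).hasFDerivAt).comp y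
        (hasFDerivAt_prodMk_right t y)
    show fderiv ℝ (fun x => (fun x => D (t, x)) x ((1 : ℝ), (0 : Pt N))) y (Pi.single k 1) = _
    rw [fderiv_clm_apply h3.differentiableAt (differentiableAt_const _)]
    simp only [ContinuousLinearMap.add_apply, ContinuousLinearMap.flip_apply,
      ContinuousLinearMap.comp_apply, fderiv_const, Pi.zero_apply,
      ContinuousLinearMap.zero_apply, add_zero, ContinuousLinearMap.zero_comp]
    rw [h3.fderiv]
    simp [ContinuousLinearMap.comp_apply, ContinuousLinearMap.inr_apply]
  rw [stepD, ← hsymm]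
  have : (fun τ => pd k (fun x => g (τ, x)) y)
      = fun τ => D (τ, y) ((0 : ℝ), Pi.single k 1) := funext stepA
  rw [this]
  exact h2

end Helpers3
section Helpers4
open Finset Set

lemma linODE_zero {N : ℕ} {T : ℝ} (A : ℝ → Matrix (Fin N) (Fin N) ℝ)
    (hA : ∀ i r, ContinuousOn (fun t => A t i r) (Set.Icc 0 T))
    (Z : ℝ → Matrix (Fin N) (Fin N) ℝ) (hZ0 : Z 0 = 0)
    (hZ : ∀ t ∈ Set.Icc (0:ℝ) T, ∀ i k,
      HasDerivAt (fun τ => Z τ i k) (∑ r, A t i r * Z t r k) t) :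
    ∀ t ∈ Set.Icc (0:ℝ) T, Z t = 0 := by
  -- bound on A
  have hAcont : ContinuousOn (fun t => (fun i r => A t i r : Fin N → Fin N → ℝ))
      (Set.Icc 0 T) :=
    continuousOn_pi.2 fun i => continuousOn_pi.2 fun r => hA i r
  obtain ⟨C, hC⟩ := isCompact_Icc.exists_bound_of_continuousOn hAcont
  set K : ℝ := N * max C 0 with hK
  have hKnn : 0 ≤ K := mul_nonneg (Nat.cast_nonneg N) (le_max_right _ _)
  have hAentry : ∀ t ∈ Set.Icc (0:ℝ) T, ∀ i r, |A t i r| ≤ max C 0 := by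
    intro t ht i r
    refine le_trans (le_trans ?_ (hC t ht)) (le_max_left _ _)
    exact le_trans (norm_le_pi_norm ((fun i r => A t i r : Fin N → Fin N → ℝ) i) r)
      (norm_le_pi_norm (fun i r => A t i r : Fin N → Fin N → ℝ) i)
  -- the Pi-valued function
  set f : ℝ → (Fin N → Fin N → ℝ) := fun t i k => Z t i k with hf
  have hfd : ∀ t ∈ Set.Icc (0:ℝ) T,
      HasDerivAt f (fun i k => ∑ r, A t i r * Z t r k) t := by
    intro t ht
    exact hasDerivAt_pi.2 fun i => hasDerivAt_pi.2 fun k => hZ t ht i k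
  have hfc : ContinuousOn f (Set.Icc 0 T) := fun t ht =>
    ((hfd t ht).continuousAt).continuousWithinAt
  have hZentry : ∀ t, ∀ i k : Fin N, |Z t i k| ≤ ‖f t‖ := fun t i k =>
    le_trans (norm_le_pi_norm (f t i) k) (norm_le_pi_norm (f t) i)
  have hbound : ∀ t ∈ Set.Ico (0:ℝ) T,
      ‖(fun i k => ∑ r, A t i r * Z t r k : Fin N → Fin N → ℝ)‖ ≤ K * ‖f t‖ + 0 := by
    intro t ht
    rw [add_zero]
    have hKf : 0 ≤ K * ‖f t‖ := mul_nonneg hKnn (norm_nonneg _)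
    rw [pi_norm_le_iff_of_nonneg hKf]
    intro i
    rw [pi_norm_le_iff_of_nonneg hKf]
    intro k
    have : |∑ r, A t i r * Z t r k| ≤ ∑ r : Fin N, max C 0 * ‖f t‖ := by
      refine le_trans (Finset.abs_sum_le_sum_abs _ _) (Finset.sum_le_sum fun r _ => ?_)
      rw [abs_mul]
      exact mul_le_mul (hAentry t (Set.mem_Icc_of_Ico ht) i r) (hZentry t r k)
        (abs_nonneg _) (le_max_right _ _)
    simpa [hK, Finset.sum_const, Finset.card_univ, nsmul_eq_mul, mul_assoc] using this
  have hmain := norm_le_gronwallBound_of_norm_deriv_right_le (δ := 0) (K := K) (ε := 0)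
    (a := 0) (b := T) hfc
    (fun t ht => ((hfd t (Set.mem_Icc_of_Ico ht)).hasDerivWithinAt))
    (by
      have hf00 : f 0 = 0 := by
        funext i k
        show Z 0 i k = 0
        rw [hZ0]; rfl
      rw [hf00, norm_zero])
    hbound
  intro t ht
  have := hmain t ht
  rw [gronwallBound_ε0_δ0] at this
  have hf0 : f t = 0 := norm_le_zero_iff.1 this
  funext i k
  have : f t i k = 0 := by rw [hf0]; rfl
  exact this
section Helpers5
open Matrix
open Finset

variable {N : ℕ}

lemma hasDerivAt_exp_entry (M : Matrix (Fin N) (Fin N) ℝ) (t : ℝ) (i k : Fin N) :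
    HasDerivAt (fun τ : ℝ => NormedSpace.exp (τ • M) i k)
      ((M * NormedSpace.exp (t • M)) i k) t := by
  letI : SeminormedRing (Matrix (Fin N) (Fin N) ℝ) := Matrix.linftyOpSemiNormedRing
  letI : NormedRing (Matrix (Fin N) (Fin N) ℝ) := Matrix.linftyOpNormedRing
  letI : NormedAlgebra ℝ (Matrix (Fin N) (Fin N) ℝ) := Matrix.linftyOpNormedAlgebra
  have h := hasDerivAt_exp_smul_const' (𝕂 := ℝ) M t
  let e : Matrix (Fin N) (Fin N) ℝ →L[ℝ] ℝ :=
    LinearMap.mkContinuous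
      { toFun := fun A => A i k, map_add' := fun _ _ => rfl, map_smul' := fun _ _ => rfl } 1
      (fun A => by
        rw [one_mul]
        have h1 : ‖A i k‖₊ ≤ ‖A‖₊ := by
          rw [Matrix.linfty_opNNNorm_def]
          exact le_trans
            (Finset.single_le_sum (f := fun j => ‖A i j‖₊) (fun j _ => zero_le)
              (Finset.mem_univ k))
            (Finset.le_sup (f := fun i => ∑ j, ‖A i j‖₊) (Finset.mem_univ i))
        exact h1)
  exact e.hasFDerivAt.comp_hasDerivAt t h

lemma Psi_antisymm (S : SymplForm N) (z : Pt N) (m i : Fin N) :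
    Psi S.ω z m i = - Psi S.ω z i m := by
  have hωT : (S.ω z)ᵀ = - S.ω z := by
    ext a b
    rw [Matrix.transpose_apply, Matrix.neg_apply]
    exact S.antisymm z b a
  have hT : (Psi S.ω z)ᵀ = - Psi S.ω z := by
    show ((S.ω z)⁻¹)ᵀ = -(S.ω z)⁻¹
    rw [Matrix.transpose_nonsing_inv, hωT]
    refine Matrix.inv_eq_right_inv ?_
    rw [Matrix.neg_mul, Matrix.mul_neg, neg_neg, Matrix.mul_nonsing_inv _ (S.invertible z)]
  have h := congrFun (congrFun hT i) m
  rw [Matrix.transpose_apply, Matrix.neg_apply] at h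
  exact h

lemma covH_apply {S : SymplForm N} (C : SymplConn N S) (Hm : Pt N → ℝ) (z : Pt N)
    (j k : Fin N) :
    covHessM C Hm z j k
      = pd j (fun w => pd k Hm w) z - ∑ m, C.Γ z m j k * pd m Hm z := rfl

lemma covHess_symm {S : SymplForm N} (C : SymplConn N S) (Hm : Pt N → ℝ)
    (hHm : ContDiff ℝ (⊤ : ℕ∞) Hm) (z : Pt N) (j k : Fin N) :
    covHessM C Hm z j k = covHessM C Hm z k j := by
  rw [covH_apply, covH_apply, pd_pd_symm Hm hHm z j k]
  congr 1
  exact Finset.sum_congr rfl fun m _ => by rw [C.symm z m j k]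

lemma contDiff_covHess {S : SymplForm N} (C : SymplConn N S) (Hm : Pt N → ℝ)
    (hHm : ContDiff ℝ (⊤ : ℕ∞) Hm) (j k : Fin N) :
    ContDiff ℝ (⊤ : ℕ∞) fun z => covHessM C Hm z j k := by
  have : (fun z => covHessM C Hm z j k)
      = fun z => pd j (fun w => pd k Hm w) z - ∑ m, C.Γ z m j k * pd m Hm z := rfl
  rw [this]
  exact (contDiff_pd _ (contDiff_pd Hm hHm k) j).sub
    (ContDiff.sum fun m _ => (C.smooth m j k).mul (contDiff_pd Hm hHm m))

lemma contDiff_F (S : SymplForm N) (Hm : Pt N → ℝ) (hHm : ContDiff ℝ (⊤ : ℕ∞) Hm) (i : Fin N) :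
    ContDiff ℝ (⊤ : ℕ∞) fun z => ∑ m, pd m Hm z * Psi S.ω z m i :=
  ContDiff.sum fun m _ => (contDiff_pd Hm hHm m).mul (contDiff_Psi S m i)

lemma pdF_eq (S : SymplForm N) (C : SymplConn N S) (Hm : Pt N → ℝ) (hHm : ContDiff ℝ (⊤ : ℕ∞) Hm)
    (z : Pt N) (i r : Fin N) :
    pd r (fun w => ∑ m, pd m Hm w * Psi S.ω w m i) z
      = -(∑ m, Psi S.ω z i m * covHessM C Hm z m r)
        - ∑ b, (∑ m, pd m Hm z * Psi S.ω z m b) * C.Γ z i b r := by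
  have dpdH : ∀ m : Fin N, DifferentiableAt ℝ (fun w => pd m Hm w) z :=
    fun m => (contDiff_pd Hm hHm m).differentiable (by simp) z
  have dPsi : ∀ a b : Fin N, DifferentiableAt ℝ (fun w => Psi S.ω w a b) z :=
    fun a b => (contDiff_Psi S a b).differentiable (by simp) z
  rw [pd_sum _ _ _ _ (fun m _ => (dpdH m).fun_mul (dPsi m i))]
  rw [Finset.sum_congr rfl (fun m _ => pd_mul _ _ _ _ (dpdH m) (dPsi m i))]
  have step : ∀ m : Fin N,
      pd r (fun w => pd m Hm w) z * Psi S.ω z m i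
        + pd m Hm z * pd r (fun w => Psi S.ω w m i) z
      = covHessM C Hm z r m * Psi S.ω z m i
        + (∑ l, C.Γ z l r m * pd l Hm z) * Psi S.ω z m i
        - pd m Hm z * (∑ a, Psi S.ω z m a * C.Γ z i a r)
        - pd m Hm z * (∑ b, C.Γ z m b r * Psi S.ω z b i) := by
    intro m
    rw [pd_Psi S C z r m i]
    have h1 : pd r (fun w => pd m Hm w) z
        = covHessM C Hm z r m + ∑ l, C.Γ z l r m * pd l Hm z := by
      rw [covH_apply]; ring
    rw [h1]; ring
  rw [Finset.sum_congr rfl (fun m _ => step m)]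
  rw [Finset.sum_sub_distrib, Finset.sum_sub_distrib, Finset.sum_add_distrib]
  have t1 : ∑ m, covHessM C Hm z r m * Psi S.ω z m i
      = -∑ m, Psi S.ω z i m * covHessM C Hm z m r := by
    rw [← Finset.sum_neg_distrib]
    refine Finset.sum_congr rfl fun m _ => ?_
    rw [covHess_symm C Hm hHm z r m, Psi_antisymm S z m i]
    ring
  have t2 : ∑ m, (∑ l, C.Γ z l r m * pd l Hm z) * Psi S.ω z m i
      = ∑ m, pd m Hm z * (∑ b, C.Γ z m b r * Psi S.ω z b i) := by
    simp only [Finset.sum_mul, Finset.mul_sum]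
    rw [Finset.sum_comm]
    refine Finset.sum_congr rfl fun l _ => Finset.sum_congr rfl fun m _ => ?_
    rw [C.symm z l r m]
    ring
  have t3 : ∑ m, pd m Hm z * (∑ a, Psi S.ω z m a * C.Γ z i a r)
      = ∑ b, (∑ m, pd m Hm z * Psi S.ω z m b) * C.Γ z i b r := by
    simp only [Finset.mul_sum, Finset.sum_mul]
    rw [Finset.sum_comm]
    exact Finset.sum_congr rfl fun a _ => Finset.sum_congr rfl fun m _ => by ring
  rw [t1, t2, t3]
  ring

end Helpers5
section Helpers6
open Finset

variable {N : ℕ}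

lemma Pdot_eq (S : SymplForm N) (C : SymplConn N S) (Hm : Pt N → ℝ)
    (z : Pt N) (Fv : Fin N → ℝ)
    (hq : ∀ a r : Fin N,
      ∑ ρ, Fv ρ * (pd ρ (fun w => covHessM C Hm w a r) z
        - ∑ m, C.Γ z m a ρ * covHessM C Hm z m r
        - ∑ m, C.Γ z m r ρ * covHessM C Hm z a m) = 0)
    (i r : Fin N) :
    ∑ a, ((∑ ρ, Fv ρ * pd ρ (fun w => Psi S.ω w i a) z) * covHessM C Hm z a r
        + Psi S.ω z i a * (∑ ρ, Fv ρ * pd ρ (fun w => covHessM C Hm w a r) z))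
      = (∑ m, (∑ a, Psi S.ω z i a * covHessM C Hm z a m) * (∑ ρ, Fv ρ * C.Γ z m r ρ))
        - ∑ m, (∑ ρ, Fv ρ * C.Γ z i m ρ) * (∑ a, Psi S.ω z m a * covHessM C Hm z a r) := by
  set Ψ : Matrix (Fin N) (Fin N) ℝ := Psi S.ω z with hΨdef
  set Hn : Matrix (Fin N) (Fin N) ℝ := covHessM C Hm z with hHdef
  set Γ : Fin N → Fin N → Fin N → ℝ := C.Γ z with hΓdef
  set T1 : ℝ := ∑ a, ∑ ρ, ∑ b, Fv ρ * Ψ i b * Γ a b ρ * Hn a r with hT1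
  set T2 : ℝ := ∑ a, ∑ ρ, ∑ b, Fv ρ * Γ i b ρ * Ψ b a * Hn a r with hT2
  set T3 : ℝ := ∑ a, ∑ ρ, ∑ m, Ψ i a * Fv ρ * Γ m a ρ * Hn m r with hT3
  set T4 : ℝ := ∑ a, ∑ ρ, ∑ m, Ψ i a * Fv ρ * Γ m r ρ * Hn a m with hT4
  have hq' : ∀ a : Fin N, ∑ ρ, Fv ρ * pd ρ (fun w => covHessM C Hm w a r) z
      = (∑ ρ, Fv ρ * ∑ m, Γ m a ρ * Hn m r) + ∑ ρ, Fv ρ * ∑ m, Γ m r ρ * Hn a m := by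
    intro a
    have h0 := hq a r
    have h1 : ∀ ρ : Fin N, Fv ρ * (pd ρ (fun w => covHessM C Hm w a r) z
        - ∑ m, C.Γ z m a ρ * covHessM C Hm z m r
        - ∑ m, C.Γ z m r ρ * covHessM C Hm z a m)
        = Fv ρ * pd ρ (fun w => covHessM C Hm w a r) z
          - Fv ρ * ∑ m, Γ m a ρ * Hn m r - Fv ρ * ∑ m, Γ m r ρ * Hn a m := by
      intro ρ; rw [hΓdef, hHdef]; ring
    rw [Finset.sum_congr rfl (fun ρ _ => h1 ρ), Finset.sum_sub_distrib,
      Finset.sum_sub_distrib] at h0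
    linarith
  have hps : ∀ a : Fin N, ∑ ρ, Fv ρ * pd ρ (fun w => Psi S.ω w i a) z
      = -(∑ ρ, Fv ρ * ∑ b, Ψ i b * Γ a b ρ) - ∑ ρ, Fv ρ * ∑ b, Γ i b ρ * Ψ b a := by
    intro a
    have h1 : ∀ ρ : Fin N, Fv ρ * pd ρ (fun w => Psi S.ω w i a) z
        = -(Fv ρ * ∑ b, Ψ i b * Γ a b ρ) - Fv ρ * ∑ b, Γ i b ρ * Ψ b a := by
      intro ρ
      rw [pd_Psi S C z ρ i a, hΓdef, hΨdef]
      ring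
    rw [Finset.sum_congr rfl (fun ρ _ => h1 ρ), Finset.sum_sub_distrib,
      Finset.sum_neg_distrib]
  -- flatten the left-hand side
  have e1 : ∀ a : Fin N, (∑ ρ, Fv ρ * ∑ b, Ψ i b * Γ a b ρ) * Hn a r
      = ∑ ρ, ∑ b, Fv ρ * Ψ i b * Γ a b ρ * Hn a r := by
    intro a
    rw [Finset.sum_mul]
    exact Finset.sum_congr rfl fun ρ _ => by
      rw [Finset.mul_sum, Finset.sum_mul]
      exact Finset.sum_congr rfl fun b _ => by ring
  have e2 : ∀ a : Fin N, (∑ ρ, Fv ρ * ∑ b, Γ i b ρ * Ψ b a) * Hn a r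
      = ∑ ρ, ∑ b, Fv ρ * Γ i b ρ * Ψ b a * Hn a r := by
    intro a
    rw [Finset.sum_mul]
    exact Finset.sum_congr rfl fun ρ _ => by
      rw [Finset.mul_sum, Finset.sum_mul]
      exact Finset.sum_congr rfl fun b _ => by ring
  have e3 : ∀ a : Fin N, Ψ i a * (∑ ρ, Fv ρ * ∑ m, Γ m a ρ * Hn m r)
      = ∑ ρ, ∑ m, Ψ i a * Fv ρ * Γ m a ρ * Hn m r := by
    intro a
    rw [Finset.mul_sum]
    exact Finset.sum_congr rfl fun ρ _ => by
      rw [Finset.mul_sum, Finset.mul_sum]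
      exact Finset.sum_congr rfl fun m _ => by ring
  have e4 : ∀ a : Fin N, Ψ i a * (∑ ρ, Fv ρ * ∑ m, Γ m r ρ * Hn a m)
      = ∑ ρ, ∑ m, Ψ i a * Fv ρ * Γ m r ρ * Hn a m := by
    intro a
    rw [Finset.mul_sum]
    exact Finset.sum_congr rfl fun ρ _ => by
      rw [Finset.mul_sum, Finset.mul_sum]
      exact Finset.sum_congr rfl fun m _ => by ring
  have h2 : ∀ a : Fin N,
      (∑ ρ, Fv ρ * pd ρ (fun w => Psi S.ω w i a) z) * covHessM C Hm z a r
        + Psi S.ω z i a * (∑ ρ, Fv ρ * pd ρ (fun w => covHessM C Hm w a r) z)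
      = -(∑ ρ, ∑ b, Fv ρ * Ψ i b * Γ a b ρ * Hn a r)
        - (∑ ρ, ∑ b, Fv ρ * Γ i b ρ * Ψ b a * Hn a r)
        + ((∑ ρ, ∑ m, Ψ i a * Fv ρ * Γ m a ρ * Hn m r)
          + ∑ ρ, ∑ m, Ψ i a * Fv ρ * Γ m r ρ * Hn a m) := by
    intro a
    rw [hps a, hq' a]
    rw [show covHessM C Hm z a r = Hn a r from rfl, show Psi S.ω z i a = Ψ i a from rfl]
    rw [sub_mul, neg_mul, e1 a, e2 a, mul_add, e3 a, e4 a]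
  have hLHS : ∑ a, ((∑ ρ, Fv ρ * pd ρ (fun w => Psi S.ω w i a) z) * covHessM C Hm z a r
        + Psi S.ω z i a * (∑ ρ, Fv ρ * pd ρ (fun w => covHessM C Hm w a r) z))
      = -T1 - T2 + (T3 + T4) := by
    rw [Finset.sum_congr rfl (fun a _ => h2 a)]
    rw [Finset.sum_add_distrib, Finset.sum_sub_distrib, Finset.sum_neg_distrib,
      Finset.sum_add_distrib]
  -- T3 = T1
  have hT13 : T3 = T1 := by
    rw [hT3, hT1]
    calc ∑ a, ∑ ρ, ∑ m, Ψ i a * Fv ρ * Γ m a ρ * Hn m r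
        = ∑ a, ∑ m, ∑ ρ, Ψ i a * Fv ρ * Γ m a ρ * Hn m r :=
          Finset.sum_congr rfl fun a _ => Finset.sum_comm
      _ = ∑ m, ∑ a, ∑ ρ, Ψ i a * Fv ρ * Γ m a ρ * Hn m r := Finset.sum_comm
      _ = ∑ m, ∑ ρ, ∑ a, Ψ i a * Fv ρ * Γ m a ρ * Hn m r :=
          Finset.sum_congr rfl fun m _ => Finset.sum_comm
      _ = ∑ a, ∑ ρ, ∑ b, Fv ρ * Ψ i b * Γ a b ρ * Hn a r :=
          Finset.sum_congr rfl fun a _ => Finset.sum_congr rfl fun ρ _ =>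
            Finset.sum_congr rfl fun b _ => by ring
  -- RHS = T4 - T2
  have hR1 : (∑ m, (∑ a, Ψ i a * Hn a m) * (∑ ρ, Fv ρ * Γ m r ρ)) = T4 := by
    rw [hT4]
    calc ∑ m, (∑ a, Ψ i a * Hn a m) * (∑ ρ, Fv ρ * Γ m r ρ)
        = ∑ m, ∑ a, ∑ ρ, Ψ i a * Fv ρ * Γ m r ρ * Hn a m := by
          refine Finset.sum_congr rfl fun m _ => ?_
          rw [Finset.sum_mul]
          refine Finset.sum_congr rfl fun a _ => ?_
          rw [Finset.mul_sum]
          exact Finset.sum_congr rfl fun ρ _ => by ring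
      _ = ∑ a, ∑ m, ∑ ρ, Ψ i a * Fv ρ * Γ m r ρ * Hn a m := Finset.sum_comm
      _ = ∑ a, ∑ ρ, ∑ m, Ψ i a * Fv ρ * Γ m r ρ * Hn a m :=
          Finset.sum_congr rfl fun a _ => Finset.sum_comm
  have hR2 : (∑ m, (∑ ρ, Fv ρ * Γ i m ρ) * (∑ a, Ψ m a * Hn a r)) = T2 := by
    rw [hT2]
    calc ∑ m, (∑ ρ, Fv ρ * Γ i m ρ) * (∑ a, Ψ m a * Hn a r)
        = ∑ m, ∑ ρ, ∑ a, Fv ρ * Γ i m ρ * Ψ m a * Hn a r := by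
          refine Finset.sum_congr rfl fun m _ => ?_
          rw [Finset.sum_mul]
          refine Finset.sum_congr rfl fun ρ _ => ?_
          rw [Finset.mul_sum]
          exact Finset.sum_congr rfl fun a _ => by ring
      _ = ∑ m, ∑ a, ∑ ρ, Fv ρ * Γ i m ρ * Ψ m a * Hn a r :=
          Finset.sum_congr rfl fun m _ => Finset.sum_comm
      _ = ∑ a, ∑ m, ∑ ρ, Fv ρ * Γ i m ρ * Ψ m a * Hn a r := Finset.sum_comm
      _ = ∑ a, ∑ ρ, ∑ b, Fv ρ * Γ i b ρ * Ψ b a * Hn a r := by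
          refine Finset.sum_congr rfl fun a _ => (Finset.sum_comm.trans ?_)
          exact Finset.sum_congr rfl fun ρ _ => Finset.sum_congr rfl fun b _ => by ring
  rw [hLHS, hR1, hR2, hT13]
  ring

end Helpers6

/-- Corollary 6.2, formula (6.12): if `H` is covariantly quadratic along the trajectory,
`∇_{∇HΨ}(∇²H) = 0`, then the Jacobian of the Hamiltonian flow at `y` factorizes as
`dX^t(y) = V(t)·exp(−t·Ψ(y)·∇²H(y))`: parallel transport times a dynamical exponential.
For a periodic trajectory this factors the monodromy into the geometric monodromy
(the holonomy of `Γ`) and the dynamical monodromy with generator `−Ψ(y)∇²H(y)`. -/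
theorem covariantly_quadratic_monodromy_factorization (n : ℕ) (S : SymplForm (2*n))
    (C : SymplConn (2*n) S)
    (Hm : Pt (2*n) → ℝ) (hHm : ContDiff ℝ (⊤ : ℕ∞) Hm)
    (T : ℝ) (hT : 0 ≤ T) (y : Pt (2*n))
    -- the Hamiltonian flow `X^t` of `H`, jointly smooth
    (X : ℝ → Pt (2*n) → Pt (2*n))
    (hXsmooth : ∀ i, ContDiff ℝ (⊤ : ℕ∞) fun q : ℝ × Pt (2*n) => X q.1 q.2 i)
    (hX0 : ∀ x, X 0 x = x)
    (hXode : ∀ t ∈ Set.Icc (0:ℝ) T, ∀ x i,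
      HasDerivAt (fun τ => X τ x i)
        (∑ m, pd m Hm (X t x) * Psi S.ω (X t x) m i) t)
    -- the `Γ`-parallel transport `V(t)` along the trajectory `t ↦ X^t(y)`
    (V : ℝ → Matrix (Fin (2*n)) (Fin (2*n)) ℝ)
    (hV0 : V 0 = 1)
    (hVode : ∀ t ∈ Set.Icc (0:ℝ) T, ∀ i k,
      HasDerivAt (fun τ => V τ i k)
        (-∑ j, ∑ m, deriv (fun τ => X τ y j) t * C.Γ (X t y) i m j * V t m k) t)
    -- `H` is covariantly quadratic along the trajectory: `∇_{∇HΨ}(∇²H) = 0`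
    (hquad : ∀ τ ∈ Set.Icc (0:ℝ) T, ∀ j k,
      ∑ r, (∑ m, pd m Hm (X τ y) * Psi S.ω (X τ y) m r)
        * (pd r (fun w => covHessM C Hm w j k) (X τ y)
            - ∑ m, C.Γ (X τ y) m j r * covHessM C Hm (X τ y) m k
            - ∑ m, C.Γ (X τ y) m k r * covHessM C Hm (X τ y) j m) = 0) :
    ∀ t ∈ Set.Icc (0:ℝ) T,
      (Matrix.of fun i k => pd k (fun x => X t x i) y)
        = V t * NormedSpace.exp ((-t) • (Psi S.ω y * covHessM C Hm y)) := by
  classical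
  set F : Fin (2*n) → Pt (2*n) → ℝ := fun i z => ∑ m, pd m Hm z * Psi S.ω z m i with hFdef
  set c : ℝ → Pt (2*n) := fun τ => X τ y with hcdef
  set M : Matrix (Fin (2*n)) (Fin (2*n)) ℝ := Psi S.ω y * covHessM C Hm y with hMdef
  set P : ℝ → Matrix (Fin (2*n)) (Fin (2*n)) ℝ :=
    fun τ => Psi S.ω (c τ) * covHessM C Hm (c τ) with hPdef
  set G : ℝ → Matrix (Fin (2*n)) (Fin (2*n)) ℝ :=
    fun τ => Matrix.of fun i m => ∑ j, F j (c τ) * C.Γ (c τ) i m j with hGdef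
  set E : ℝ → Matrix (Fin (2*n)) (Fin (2*n)) ℝ :=
    fun τ => NormedSpace.exp (τ • (-M)) with hEdef
  -- basic smoothness / continuity facts
  have hccont : Continuous c :=
    continuous_pi fun r => (hXsmooth r).continuous.comp (continuous_id.prodMk continuous_const)
  have hFsm : ∀ i, ContDiff ℝ (⊤ : ℕ∞) (F i) := fun i => contDiff_F S Hm hHm i
  have hFd : ∀ τ ∈ Set.Icc (0:ℝ) T, ∀ r, HasDerivAt (fun σ => c σ r) (F r (c τ)) τ :=
    fun τ hτ r => hXode τ hτ y r
  have hPcont : ∀ i r, Continuous fun τ => P τ i r := by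
    intro i r
    have : (fun τ => P τ i r)
        = fun τ => ∑ a, Psi S.ω (c τ) i a * covHessM C Hm (c τ) a r := by
      funext τ; rw [hPdef]; exact Matrix.mul_apply
    rw [this]
    exact continuous_finset_sum _ fun a _ =>
      (((contDiff_Psi S i a).continuous).comp hccont).mul
        (((contDiff_covHess C Hm hHm a r).continuous).comp hccont)
  have hGcont : ∀ i m, Continuous fun τ => G τ i m := by
    intro i m
    show Continuous fun τ => ∑ j, F j (c τ) * C.Γ (c τ) i m j
    refine continuous_finset_sum _ fun j _ => Continuous.mul ?_ ?_
    · exact ((hFsm j).continuous).comp hccont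
    · exact ((C.smooth i m j).continuous).comp hccont
  -- V satisfies V' = -(G V)
  have hV' : ∀ τ ∈ Set.Icc (0:ℝ) T, ∀ i k,
      HasDerivAt (fun σ => V σ i k) (-∑ m, G τ i m * V τ m k) τ := by
    intro τ hτ i k
    have h0 := hVode τ hτ i k
    have hval : (-∑ j, ∑ m, deriv (fun σ => X σ y j) τ * C.Γ (X τ y) i m j * V τ m k)
        = -∑ m, G τ i m * V τ m k := by
      congr 1
      calc ∑ j, ∑ m, deriv (fun σ => X σ y j) τ * C.Γ (X τ y) i m j * V τ m k
          = ∑ j, ∑ m, F j (c τ) * C.Γ (c τ) i m j * V τ m k := by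
            refine Finset.sum_congr rfl fun j _ => Finset.sum_congr rfl fun m _ => ?_
            rw [show deriv (fun σ => X σ y j) τ = F j (c τ) from (hFd τ hτ j).deriv]
        _ = ∑ m, ∑ j, F j (c τ) * C.Γ (c τ) i m j * V τ m k := Finset.sum_comm
        _ = ∑ m, G τ i m * V τ m k := by
            refine Finset.sum_congr rfl fun m _ => ?_
            rw [show G τ i m = ∑ j, F j (c τ) * C.Γ (c τ) i m j from rfl, Finset.sum_mul]
    rw [← hval]
    exact h0
  -- P satisfies P' = P G - G P (parallel transport of the tensor Ψ∇²H)
  have hPd : ∀ τ ∈ Set.Icc (0:ℝ) T, ∀ i r, HasDerivAt (fun σ => P σ i r)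
      ((P τ * G τ - G τ * P τ) i r) τ := by
    intro τ hτ i r
    have hterm : ∀ a : Fin (2*n),
        HasDerivAt (fun σ => Psi S.ω (c σ) i a * covHessM C Hm (c σ) a r)
        ((∑ ρ, F ρ (c τ) * pd ρ (fun w => Psi S.ω w i a) (c τ)) * covHessM C Hm (c τ) a r
          + Psi S.ω (c τ) i a
            * (∑ ρ, F ρ (c τ) * pd ρ (fun w => covHessM C Hm w a r) (c τ))) τ := by
      intro a
      have h1 : HasDerivAt (fun σ => Psi S.ω (c σ) i a)
          (∑ ρ, F ρ (c τ) * pd ρ (fun w => Psi S.ω w i a) (c τ)) τ :=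
        hasDerivAt_comp_curve _ c (fun ρ => F ρ (c τ)) τ (hFd τ hτ)
          ((contDiff_Psi S i a).differentiable (by simp) _)
      have h2 : HasDerivAt (fun σ => covHessM C Hm (c σ) a r)
          (∑ ρ, F ρ (c τ) * pd ρ (fun w => covHessM C Hm w a r) (c τ)) τ :=
        hasDerivAt_comp_curve _ c (fun ρ => F ρ (c τ)) τ (hFd τ hτ)
          ((contDiff_covHess C Hm hHm a r).differentiable (by simp) _)
      exact h1.mul h2
    have hsum := HasDerivAt.fun_sum (fun a (_ : a ∈ Finset.univ) => hterm a)
    have hfun : (fun σ => ∑ a, Psi S.ω (c σ) i a * covHessM C Hm (c σ) a r)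
        = fun σ => P σ i r := by
      funext σ; rw [hPdef]; exact Matrix.mul_apply.symm
    rw [hfun] at hsum
    have hval := Pdot_eq S C Hm (c τ) (fun ρ => F ρ (c τ))
      (fun a b => hquad τ hτ a b) i r
    have hmatch : (P τ * G τ - G τ * P τ) i r
        = (∑ m, (∑ a, Psi S.ω (c τ) i a * covHessM C Hm (c τ) a m)
            * (∑ ρ, F ρ (c τ) * C.Γ (c τ) m r ρ))
          - ∑ m, (∑ ρ, F ρ (c τ) * C.Γ (c τ) i m ρ)
            * (∑ a, Psi S.ω (c τ) m a * covHessM C Hm (c τ) a r) := by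
      rfl
    rw [hmatch, ← hval]
    exact hsum
  -- Y := P V - V M vanishes on [0,T]
  have hc0 : c 0 = y := hX0 y
  have hP0 : P 0 = M := by
    show Psi S.ω (c 0) * covHessM C Hm (c 0) = M
    rw [hc0]
  have hYzero : ∀ τ ∈ Set.Icc (0:ℝ) T, P τ * V τ - V τ * M = 0 := by
    have hY0 : P 0 * V 0 - V 0 * M = 0 := by rw [hV0, hP0, mul_one, one_mul, sub_self]
    refine linODE_zero (fun τ => -G τ)
      (fun i r => ((hGcont i r).neg).continuousOn)
      (fun τ => P τ * V τ - V τ * M) hY0 ?_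
    intro τ hτ i k
    have hterm : ∀ m : Fin (2*n),
        HasDerivAt (fun σ => P σ i m * V σ m k)
          ((P τ * G τ - G τ * P τ) i m * V τ m k + P τ i m * (-∑ l, G τ m l * V τ l k)) τ :=
      fun m => (hPd τ hτ i m).mul (hV' τ hτ m k)
    have hterm2 : ∀ m : Fin (2*n),
        HasDerivAt (fun σ => V σ i m * M m k)
          ((-∑ l, G τ i l * V τ l m) * M m k) τ := by
      intro m
      simpa using (hV' τ hτ i m).mul_const (M m k)
    have hsum1 := HasDerivAt.fun_sum (fun m (_ : m ∈ Finset.univ) => hterm m)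
    have hsum2 := HasDerivAt.fun_sum (fun m (_ : m ∈ Finset.univ) => hterm2 m)
    have hD := hsum1.fun_sub hsum2
    have hfun : (fun σ => (∑ m, P σ i m * V σ m k) - ∑ m, V σ i m * M m k)
        = fun σ => (P σ * V σ - V σ * M) i k := by
      funext σ
      rw [Matrix.sub_apply, Matrix.mul_apply, Matrix.mul_apply]
    rw [hfun] at hD
    have hval : (∑ m, ((P τ * G τ - G τ * P τ) i m * V τ m k
          + P τ i m * (-∑ l, G τ m l * V τ l k)))
          - ∑ m, (-∑ l, G τ i l * V τ l m) * M m k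
        = ∑ r, (-G τ) i r * (P τ * V τ - V τ * M) r k := by
      have e1 : ∑ m, ((P τ * G τ - G τ * P τ) i m * V τ m k
            + P τ i m * (-∑ l, G τ m l * V τ l k))
          = ((P τ * G τ - G τ * P τ) * V τ) i k + (P τ * (-(G τ * V τ))) i k := by
        rw [Finset.sum_add_distrib]
        rfl
      have e2 : ∑ m, (-∑ l, G τ i l * V τ l m) * M m k = ((-(G τ * V τ)) * M) i k := by
        rfl
      rw [e1, e2]
      have hmat : (P τ * G τ - G τ * P τ) * V τ + P τ * (-(G τ * V τ)) - (-(G τ * V τ)) * M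
          = (-G τ) * (P τ * V τ - V τ * M) := by noncomm_ring
      calc ((P τ * G τ - G τ * P τ) * V τ) i k + (P τ * (-(G τ * V τ))) i k
            - ((-(G τ * V τ)) * M) i k
          = ((P τ * G τ - G τ * P τ) * V τ + P τ * (-(G τ * V τ)) - (-(G τ * V τ)) * M) i k := by
            rw [Matrix.sub_apply, Matrix.add_apply]
        _ = ((-G τ) * (P τ * V τ - V τ * M)) i k := by rw [hmat]
        _ = ∑ r, (-G τ) i r * (P τ * V τ - V τ * M) r k := Matrix.mul_apply
    rw [hval] at hD
    exact hD
  have hPV : ∀ τ ∈ Set.Icc (0:ℝ) T, P τ * V τ = V τ * M :=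
    fun τ hτ => sub_eq_zero.1 (hYzero τ hτ)
  -- the dynamical factor E
  have hE' : ∀ (τ : ℝ) (i k : Fin (2*n)),
      HasDerivAt (fun σ => E σ i k) (((-M) * E τ) i k) τ :=
    fun τ i k => hasDerivAt_exp_entry (-M) τ i k
  have hE0 : E 0 = 1 := by
    rw [hEdef]
    show NormedSpace.exp ((0:ℝ) • (-M)) = 1
    rw [zero_smul, NormedSpace.exp_zero]
  -- W := V E satisfies W' = (-P - G) W on [0,T]
  have hW : ∀ τ ∈ Set.Icc (0:ℝ) T, ∀ i k,
      HasDerivAt (fun σ => (V σ * E σ) i k)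
        (∑ r, (-P τ - G τ) i r * (V τ * E τ) r k) τ := by
    intro τ hτ i k
    have hterm : ∀ m : Fin (2*n),
        HasDerivAt (fun σ => V σ i m * E σ m k)
          ((-∑ l, G τ i l * V τ l m) * E τ m k + V τ i m * (((-M) * E τ) m k)) τ :=
      fun m => (hV' τ hτ i m).mul (hE' τ m k)
    have hsum := HasDerivAt.fun_sum (fun m (_ : m ∈ Finset.univ) => hterm m)
    have hfun : (fun σ => ∑ m, V σ i m * E σ m k) = fun σ => (V σ * E σ) i k := by
      funext σ; exact Matrix.mul_apply.symm
    rw [hfun] at hsum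
    have hval : ∑ m, ((-∑ l, G τ i l * V τ l m) * E τ m k + V τ i m * (((-M) * E τ) m k))
        = ∑ r, (-P τ - G τ) i r * (V τ * E τ) r k := by
      have e1 : ∑ m, ((-∑ l, G τ i l * V τ l m) * E τ m k + V τ i m * (((-M) * E τ) m k))
          = ((-(G τ * V τ)) * E τ) i k + (V τ * ((-M) * E τ)) i k := by
        rw [Finset.sum_add_distrib]
        rfl
      have hmat : (-(G τ * V τ)) * E τ + V τ * ((-M) * E τ)
          = (-P τ - G τ) * (V τ * E τ) := by
        have h1 : V τ * ((-M) * E τ) = -(V τ * M) * E τ := by noncomm_ring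
        rw [h1, ← hPV τ hτ]
        noncomm_ring
      rw [e1]
      calc ((-(G τ * V τ)) * E τ) i k + (V τ * ((-M) * E τ)) i k
          = ((-(G τ * V τ)) * E τ + V τ * ((-M) * E τ)) i k := by rw [Matrix.add_apply]
        _ = ((-P τ - G τ) * (V τ * E τ)) i k := by rw [hmat]
        _ = ∑ r, (-P τ - G τ) i r * (V τ * E τ) r k := Matrix.mul_apply
    rw [hval] at hsum
    exact hsum
  -- the Jacobian satisfies J' = (-P - G) J on [0,T]
  have hJ : ∀ τ ∈ Set.Icc (0:ℝ) T, ∀ i k,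
      HasDerivAt (fun σ => pd k (fun x => X σ x i) y)
        (∑ r, (-P τ - G τ) i r * pd k (fun x => X τ x r) y) τ := by
    intro τ hτ i k
    have hg := hasDerivAt_pd_param (fun q : ℝ × Pt (2*n) => X q.1 q.2 i) (hXsmooth i) y k τ
    have hvalfn : (fun x => fderiv ℝ (fun q : ℝ × Pt (2*n) => X q.1 q.2 i) (τ, x)
          ((1:ℝ), (0:Pt (2*n))))
        = fun x => F i (X τ x) := by
      funext x
      exact (hasDerivAt_param _ (hXsmooth i) x τ).unique (hXode τ hτ x i)
    have hXdiff : ∀ r, DifferentiableAt ℝ (fun x => X τ x r) y := by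
      intro r
      exact ((hXsmooth r).differentiable (by simp) (τ, y)).comp y
        ((differentiableAt_const τ).prodMk differentiableAt_id)
    have hvr : pd k (fun x => fderiv ℝ (fun q : ℝ × Pt (2*n) => X q.1 q.2 i) (τ, x)
          ((1:ℝ), (0:Pt (2*n)))) y
        = ∑ r, (-P τ - G τ) i r * pd k (fun x => X τ x r) y := by
      rw [congrArg (fun f => pd k f y) hvalfn]
      rw [pd_comp (F i) (fun x => X τ x) y k
        ((hFsm i).differentiable (by simp) _) hXdiff]
      refine Finset.sum_congr rfl fun r _ => ?_
      congr 1
      have hpdf := pdF_eq S C Hm hHm (c τ) i r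
      have hPG : (-P τ - G τ) i r
          = -(∑ m, Psi S.ω (c τ) i m * covHessM C Hm (c τ) m r)
            - ∑ b, (∑ m, pd m Hm (c τ) * Psi S.ω (c τ) m b) * C.Γ (c τ) i b r := by
        have h3 : G τ i r
            = ∑ b, (∑ m, pd m Hm (c τ) * Psi S.ω (c τ) m b) * C.Γ (c τ) i b r := by
          show (∑ j, F j (c τ) * C.Γ (c τ) i r j) = _
          exact Finset.sum_congr rfl fun b _ => by rw [C.symm (c τ) i r b]
        calc (-P τ - G τ) i r = -(P τ i r) - G τ i r := rfl
          _ = _ := by rw [h3]; rfl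
      rw [show pd r (F i) (X τ y)
          = pd r (fun w => ∑ m, pd m Hm w * Psi S.ω w m i) (c τ) from rfl, hpdf, hPG]
    rw [← hvr]
    exact hg
  -- uniqueness: J = V E on [0,T]
  have hZzero : ∀ τ ∈ Set.Icc (0:ℝ) T,
      (Matrix.of fun i k => pd k (fun x => X τ x i) y) - V τ * E τ = 0 := by
    have hAcont : ∀ i r, ContinuousOn (fun τ => (-P τ - G τ) i r) (Set.Icc 0 T) := by
      intro i r
      have : (fun τ => (-P τ - G τ) i r) = fun τ => -P τ i r - G τ i r := by
        funext τ; rw [Matrix.sub_apply, Matrix.neg_apply]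
      rw [this]
      exact (((hPcont i r).neg).sub (hGcont i r)).continuousOn
    have hZ0 : (Matrix.of fun i k => pd k (fun x => X 0 x i) y) - V 0 * E 0 = 0 := by
      rw [hV0, hE0, one_mul]
      have hJ0 : ∀ i k : Fin (2*n), pd k (fun x => X 0 x i) y
          = (1 : Matrix (Fin (2*n)) (Fin (2*n)) ℝ) i k := by
        intro i k
        have hid : (fun x : Pt (2*n) => X 0 x i) = fun x => x i :=
          funext fun x => by rw [hX0]
        rw [congrArg (fun f => pd k f y) hid]
        show fderiv ℝ (fun x : Pt (2*n) => x i) y (Pi.single k 1) = _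
        rw [(hasFDerivAt_apply i y).fderiv]
        simp [Matrix.one_apply, Pi.single_apply, eq_comm]
      have : (Matrix.of fun i k => pd k (fun x => X 0 x i) y)
          = (1 : Matrix (Fin (2*n)) (Fin (2*n)) ℝ) := by
        funext i k
        exact hJ0 i k
      rw [this, sub_self]
    refine linODE_zero (fun τ => -P τ - G τ) hAcont _ hZ0 ?_
    intro τ hτ i k
    have hJd := hJ τ hτ i k
    have hWd := hW τ hτ i k
    have hD := hJd.fun_sub hWd
    have hfun : (fun σ => pd k (fun x => X σ x i) y - (V σ * E σ) i k)
        = fun σ => ((Matrix.of fun i k => pd k (fun x => X σ x i) y) - V σ * E σ) i k := by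
      funext σ
      rw [Matrix.sub_apply, Matrix.of_apply]
    rw [hfun] at hD
    have hval : (∑ r, (-P τ - G τ) i r * pd k (fun x => X τ x r) y)
          - ∑ r, (-P τ - G τ) i r * (V τ * E τ) r k
        = ∑ r, (-P τ - G τ) i r
            * ((Matrix.of fun i k => pd k (fun x => X τ x i) y) - V τ * E τ) r k := by
      rw [← Finset.sum_sub_distrib]
      refine Finset.sum_congr rfl fun r _ => ?_
      simp only [Matrix.sub_apply, Matrix.of_apply, Matrix.neg_apply]
      ring
    rw [hval] at hD
    exact hD
  intro t ht
  have h := sub_eq_zero.1 (hZzero t ht)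
  have hEt : E t = NormedSpace.exp ((-t) • M) := by
    show NormedSpace.exp (t • -M) = _
    congr 1
    simp only [smul_neg, neg_smul]
  rw [h, hEt]
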